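/- Let (|a_i⟩)_{i=1}^N and (|b_j⟩)_{j=1}^N be two orthonormal bases of ℂ^N with transition matrix U_{ij} = ⟨a_i|b_j⟩, let |ψ⟩ ∈ ℂ^N be a unit vector, and define (x_1,…,x_{2N}) = p^ψ ⊕ q^ψ (the concatenation of the two probability vectors). Then for every k = 1,…,2N, the sum of the k largest values among x_1,…,x_{2N} is at most 1 + s_{k−1} (with s_0 = 0). As a consequence, p^ψ ⊕ q^ψ ≺ (1, s_1, s_2−s_1, s_3−s_2, …, s_N−s_{N−1}). -/

import Mathlib

/-- The measurable space structure on matrices (the product σ-algebra, which coincides with the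
Borel σ-algebra). -/
instance {m n α : Type*} [MeasurableSpace α] : MeasurableSpace (Matrix m n α) :=
  inferInstanceAs (MeasurableSpace (m → n → α))

/-- The operator norm (largest singular value) of a rectangular complex matrix, i.e. the norm of
the induced linear map between Euclidean spaces. -/
noncomputable def opNorm {m n : Type*} [Fintype m] [Fintype n] [DecidableEq n]
    (M : Matrix m n ℂ) : ℝ :=
  ‖LinearMap.toContinuousLinearMap (Matrix.toEuclideanLin M)‖

/-- `‖Û^(n,m)‖`: the maximal operator norm of an `n × m` submatrix of the `N × N` matrix `U`,
the maximum being taken over all choices of `n` rows and `m` columns. -/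
noncomputable def maxSubNorm (N n m : ℕ) (U : Matrix (Fin N) (Fin N) ℂ) : ℝ :=
  ⨆ f : Fin n ↪ Fin N, ⨆ g : Fin m ↪ Fin N, opNorm (U.submatrix f g)

/-- `s_k = max{‖Û^(1,k)‖, ‖Û^(2,k−1)‖, …, ‖Û^(k,1)‖}`, the maximal operator norm of a
submatrix of `U` with `n + m = k + 1` rows and columns (`n, m ≥ 1`).  By convention `s_0 = 0`
(the supremum over the empty range). -/
noncomputable def sk (N : ℕ) (U : Matrix (Fin N) (Fin N) ℂ) (k : ℕ) : ℝ :=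
  ⨆ a : Fin k, maxSubNorm N (a.1 + 1) (k - a.1) U

/-- For a vector `x` with nonnegative entries, `topSum x k` is the sum of the `k` largest
coordinates of `x` (the maximum of `∑_{i ∈ s} x i` over subsets `s` with `|s| ≤ k`; for
`k ≥ card ι` it equals the total sum, which corresponds to padding `x` with zeros). -/
noncomputable def topSum {ι : Type*} [Fintype ι] (x : ι → ℝ) (k : ℕ) : ℝ :=
  ⨆ s : {s : Finset ι // s.card ≤ k}, ∑ i ∈ s.1, x i

/-- Majorization `x ≺ y` for vectors with nonnegative coordinates (the index types may
differ; this amounts to padding the shorter vector with zeros): for every `k`, the sum of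
the `k` largest coordinates of `x` is at most the sum of the `k` largest coordinates of `y`,
and the total sums of coordinates agree. -/
def Majorizes {ι κ : Type*} [Fintype ι] [Fintype κ] (x : ι → ℝ) (y : κ → ℝ) : Prop :=
  (∀ k : ℕ, topSum x k ≤ topSum y k) ∧ ∑ i, x i = ∑ j, y j

/-!
For `I, J ⊆ Fin N` let `P = ∑_{i ∈ I} ⟪a i, ψ⟫ a i` and `Q = ∑_{j ∈ J} ⟪b j, ψ⟫ b j` be the
projections of `ψ`. Then `‖P‖² + ‖Q‖² = re ⟪P + Q, ψ⟫ ≤ ‖P + Q‖`, while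
`|⟪P, Q⟫| ≤ ‖U(I, J)‖ ‖P‖ ‖Q‖` gives `‖P + Q‖² ≤ (1 + ‖U(I, J)‖) (‖P‖² + ‖Q‖²)`; hence
`∑_I p + ∑_J q ≤ 1 + ‖U(I, J)‖`. Enlarging `I, J` to sizes `n + m = k` bounds this by
`1 + s_{k-1}`. The partial sums of `(1, s₁, s₂ - s₁, …)` telescope to `1 + s_{k-1}`, and
`s_N = 1` (a full column of `U` is a unit vector), which yields the majorization.
-/

open Finset RCLike
open scoped InnerProductSpace ComplexConjugate

theorem norm_sq_add_norm_sq_le_one_add {𝕜 F : Type*} [RCLike 𝕜] [NormedAddCommGroup F]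
    [InnerProductSpace 𝕜 F] {ψ P Q : F} {c : ℝ} (hψ : ‖ψ‖ ≤ 1)
    (hP : re ⟪P, ψ⟫_𝕜 = ‖P‖ ^ 2) (hQ : re ⟪Q, ψ⟫_𝕜 = ‖Q‖ ^ 2) (hc : 0 ≤ c)
    (hPQ : re ⟪P, Q⟫_𝕜 ≤ c * (‖P‖ * ‖Q‖)) :
    ‖P‖ ^ 2 + ‖Q‖ ^ 2 ≤ 1 + c := by
  set t := ‖P‖ ^ 2 + ‖Q‖ ^ 2
  have ht_le : t ≤ ‖P + Q‖ :=
    calc t = re ⟪P + Q, ψ⟫_𝕜 := by rw [inner_add_left, map_add, hP, hQ]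
      _ ≤ ‖P + Q‖ * ‖ψ‖ := re_inner_le_norm _ _
      _ ≤ ‖P + Q‖ := mul_le_of_le_one_right (norm_nonneg _) hψ
  have hPQ_le : ‖P + Q‖ ^ 2 ≤ (1 + c) * t := by
    rw [@norm_add_sq 𝕜]
    nlinarith [two_mul_le_add_sq ‖P‖ ‖Q‖]
  -- `t ^ 2 ≤ ‖P + Q‖ ^ 2 ≤ (1 + c) t`
  nlinarith [pow_le_pow_left₀ (by positivity : 0 ≤ t) ht_le 2]

section Gram

variable {E : Type*} [NormedAddCommGroup E] [InnerProductSpace ℂ E] {ι κ : Type*}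

theorem Orthonormal.norm_sum_smul [Fintype κ] {w : κ → E} (hw : Orthonormal ℂ w)
    (x : EuclideanSpace ℂ κ) :
    ‖∑ j, x j • w j‖ = ‖x‖ := by
  rw [← sq_eq_sq₀ (norm_nonneg _) (norm_nonneg _), @norm_sq_eq_re_inner ℂ,
    hw.inner_sum, EuclideanSpace.norm_sq_eq, map_sum]
  simp_rw [RCLike.conj_mul]
  norm_cast

theorem inner_sum_inner_smul_self [Fintype ι] (v : ι → E) (ψ : E) :
    ⟪∑ i, ⟪v i, ψ⟫_ℂ • v i, ψ⟫_ℂ = ((∑ i, ‖⟪v i, ψ⟫_ℂ‖ ^ 2 : ℝ) : ℂ) := by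
  simp only [sum_inner, inner_smul_left, RCLike.conj_mul]
  push_cast
  rfl

variable [Fintype κ] [DecidableEq κ] {v : ι → E} {w : κ → E} {M : Matrix ι κ ℂ}

theorem norm_toEuclideanLin_le [Fintype ι] (M : Matrix ι κ ℂ) (x : EuclideanSpace ℂ κ) :
    ‖Matrix.toEuclideanLin M x‖ ≤ opNorm M * ‖x‖ :=
  (LinearMap.toContinuousLinearMap (Matrix.toEuclideanLin M)).le_opNorm x

theorem toEuclideanLin_apply_of_gram (hM : ∀ i j, M i j = ⟪v i, w j⟫_ℂ)
    (x : EuclideanSpace ℂ κ) (i : ι) :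
    Matrix.toEuclideanLin M x i = ⟪v i, ∑ j, x j • w j⟫_ℂ := by
  simp only [inner_sum, inner_smul_right, ← hM, mul_comm]
  rfl

theorem norm_toEuclideanLin_sq_of_gram [Fintype ι] (hM : ∀ i j, M i j = ⟪v i, w j⟫_ℂ)
    (x : EuclideanSpace ℂ κ) :
    ‖Matrix.toEuclideanLin M x‖ ^ 2 = ∑ i, ‖⟪v i, ∑ j, x j • w j⟫_ℂ‖ ^ 2 := by
  simp only [EuclideanSpace.norm_sq_eq, toEuclideanLin_apply_of_gram hM]

theorem opNorm_le_one_of_gram [Fintype ι] (hv : Orthonormal ℂ v) (hw : Orthonormal ℂ w)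
    (hM : ∀ i j, M i j = ⟪v i, w j⟫_ℂ) : opNorm M ≤ 1 := by
  refine ContinuousLinearMap.opNorm_le_bound _ zero_le_one fun x => ?_
  rw [one_mul, ← sq_le_sq₀ (norm_nonneg _) (norm_nonneg _)]
  calc ‖Matrix.toEuclideanLin M x‖ ^ 2 = ∑ i, ‖⟪v i, ∑ j, x j • w j⟫_ℂ‖ ^ 2 :=
        norm_toEuclideanLin_sq_of_gram hM x
    _ ≤ ‖∑ j, x j • w j‖ ^ 2 := hv.sum_inner_products_le _
    _ = ‖x‖ ^ 2 := by rw [hw.norm_sum_smul]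

theorem one_le_opNorm_of_gram [Fintype ι] [Nonempty κ] (v : OrthonormalBasis ι ℂ E)
    (hw : Orthonormal ℂ w) (hM : ∀ i j, M i j = ⟪v i, w j⟫_ℂ) : 1 ≤ opNorm M := by
  obtain ⟨j⟩ := ‹Nonempty κ›
  set x : EuclideanSpace ℂ κ := EuclideanSpace.single j 1
  have hx : ‖x‖ = 1 := by simp [x]
  have hMx : ‖Matrix.toEuclideanLin M x‖ = 1 := by
    rw [← sq_eq_sq₀ (norm_nonneg _) zero_le_one, norm_toEuclideanLin_sq_of_gram hM,
      v.sum_sq_norm_inner_right, hw.norm_sum_smul, hx]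
  simpa [hMx, hx] using norm_toEuclideanLin_le M x

theorem inner_sum_smul_sum_smul_of_gram [Fintype ι] (hM : ∀ i j, M i j = ⟪v i, w j⟫_ℂ)
    (y : EuclideanSpace ℂ ι) (x : EuclideanSpace ℂ κ) :
    ⟪∑ i, y i • v i, ∑ j, x j • w j⟫_ℂ = ⟪y, Matrix.toEuclideanLin M x⟫_ℂ := by
  simp only [sum_inner, inner_smul_left, PiLp.inner_apply, toEuclideanLin_apply_of_gram hM,
    RCLike.inner_apply']

theorem sum_norm_inner_sq_add_sum_le_one_add_opNorm [Fintype ι] (hv : Orthonormal ℂ v)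
    (hw : Orthonormal ℂ w) (hM : ∀ i j, M i j = ⟪v i, w j⟫_ℂ) {ψ : E} (hψ : ‖ψ‖ ≤ 1) :
    ∑ i, ‖⟪v i, ψ⟫_ℂ‖ ^ 2 + ∑ j, ‖⟪w j, ψ⟫_ℂ‖ ^ 2 ≤ 1 + opNorm M := by
  set y : EuclideanSpace ℂ ι := WithLp.toLp 2 fun i => ⟪v i, ψ⟫_ℂ
  set x : EuclideanSpace ℂ κ := WithLp.toLp 2 fun j => ⟪w j, ψ⟫_ℂ
  have hP : ‖∑ i, y i • v i‖ ^ 2 = ∑ i, ‖⟪v i, ψ⟫_ℂ‖ ^ 2 := by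
    rw [hv.norm_sum_smul, EuclideanSpace.norm_sq_eq]
  have hQ : ‖∑ j, x j • w j‖ ^ 2 = ∑ j, ‖⟪w j, ψ⟫_ℂ‖ ^ 2 := by
    rw [hw.norm_sum_smul, EuclideanSpace.norm_sq_eq]
  rw [← hP, ← hQ]
  refine norm_sq_add_norm_sq_le_one_add (𝕜 := ℂ) hψ ?_ ?_ (norm_nonneg _) ?_
  · rw [hP]; exact (congrArg re (inner_sum_inner_smul_self v ψ)).trans (ofReal_re _)
  · rw [hQ]; exact (congrArg re (inner_sum_inner_smul_self w ψ)).trans (ofReal_re _)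
  calc re ⟪∑ i, y i • v i, ∑ j, x j • w j⟫_ℂ
      ≤ ‖⟪y, Matrix.toEuclideanLin M x⟫_ℂ‖ := by
        rw [inner_sum_smul_sum_smul_of_gram hM]; exact re_le_norm _
    _ ≤ ‖y‖ * (opNorm M * ‖x‖) :=
        (norm_inner_le_norm _ _).trans (mul_le_mul_of_nonneg_left (norm_toEuclideanLin_le M x)
          (norm_nonneg _))
    _ = opNorm M * (‖∑ i, y i • v i‖ * ‖∑ j, x j • w j‖) := by
        rw [hv.norm_sum_smul, hw.norm_sum_smul]; ring

end Gram

section TopSum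

variable {ι : Type*} [Fintype ι]

theorem le_topSum (x : ι → ℝ) {k : ℕ} {s : Finset ι} (hs : s.card ≤ k) :
    ∑ i ∈ s, x i ≤ topSum x k :=
  le_ciSup (f := fun s : {s : Finset ι // s.card ≤ k} => ∑ i ∈ s.1, x i)
    (Set.finite_range _).bddAbove ⟨s, hs⟩

theorem topSum_le {x : ι → ℝ} {k : ℕ} {C : ℝ}
    (h : ∀ s : Finset ι, s.card ≤ k → ∑ i ∈ s, x i ≤ C) :
    topSum x k ≤ C :=
  have : Nonempty {s : Finset ι // s.card ≤ k} := ⟨⟨∅, by simp⟩⟩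
  ciSup_le fun s => h s.1 s.2

theorem topSum_zero (x : ι → ℝ) : topSum x 0 = 0 :=
  le_antisymm (topSum_le fun s hs => by simp [card_eq_zero.mp (Nat.le_zero.mp hs)])
    (by simpa using le_topSum x (s := ∅) le_rfl)

theorem topSum_le_sum {x : ι → ℝ} (hx : 0 ≤ x) (k : ℕ) : topSum x k ≤ ∑ i, x i :=
  topSum_le fun _ _ => sum_le_univ_sum_of_nonneg hx

theorem topSum_sumElim_le {κ : Type*} [Fintype κ] {p : ι → ℝ} {q : κ → ℝ} {k : ℕ} {C : ℝ}
    (h : ∀ (I : Finset ι) (J : Finset κ),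
      I.card + J.card ≤ k → ∑ i ∈ I, p i + ∑ j ∈ J, q j ≤ C) :
    topSum (Sum.elim p q) k ≤ C :=
  topSum_le fun s hs => by
    rw [sum_sum_eq_sum_toLeft_add_sum_toRight]
    exact h _ _ (card_toLeft_add_card_toRight.trans_le hs)

end TopSum

theorem sum_range_succ_increments (s : ℕ → ℝ) (c : ℝ) (k : ℕ) :
    ∑ i ∈ range (k + 1), (if i = 0 then c else s i - s (i - 1)) = c + (s k - s 0) := by
  simp [sum_range_succ', ← sum_range_sub, add_comm]

theorem majorizes_increments {ι : Type*} [Fintype ι] {x : ι → ℝ} (hx : 0 ≤ x) {s : ℕ → ℝ}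
    {n : ℕ} (hs0 : s 0 = 0) (htot : ∑ i, x i = 1 + s n)
    (hbound : ∀ k, 1 ≤ k → k ≤ n + 1 → topSum x k ≤ 1 + s (k - 1)) :
    Majorizes x (fun i : Fin (n + 1) => if i.1 = 0 then 1 else s i.1 - s (i.1 - 1)) := by
  set y : ℕ → ℝ := fun i => if i = 0 then 1 else s i - s (i - 1)
  have hy : ∀ k, ∑ i : Fin (k + 1), y i = 1 + s k := fun k => by
    rw [Fin.sum_univ_eq_sum_range y, sum_range_succ_increments, hs0, sub_zero]
  have hpartial :
      ∀ k (hk : k + 1 ≤ n + 1), 1 + s k ≤ topSum (fun i : Fin (n + 1) => y i) (k + 1) :=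
    fun k hk => calc
      1 + s k = ∑ i ∈ univ.map (Fin.castLEEmb hk), y i := by rw [sum_map, ← hy]; rfl
      _ ≤ _ := le_topSum _ (by simp)
  refine ⟨fun k => ?_, htot.trans (hy n).symm⟩
  rcases k with _ | k
  · simp [topSum_zero]
  rcases le_or_gt (k + 1) (n + 1) with hk | hk
  · exact (hbound _ le_add_self hk).trans (hpartial k hk)
  · calc topSum x (k + 1) ≤ ∑ i, x i := topSum_le_sum hx _
      _ = ∑ i : Fin (n + 1), y i := htot.trans (hy n).symm
      _ ≤ _ := le_topSum _ (by simpa using hk.le)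

theorem exists_embedding_sum_le {α : Type*} [Fintype α] {x : α → ℝ} (hx : 0 ≤ x)
    {I : Finset α} {n : ℕ} (hI : I.card ≤ n) (hn : n ≤ Fintype.card α) :
    ∃ f : Fin n ↪ α, ∑ i ∈ I, x i ≤ ∑ s, x (f s) := by
  obtain ⟨I', hII', -, rfl⟩ := exists_subsuperset_card_eq (subset_univ I) hI (by simpa using hn)
  refine ⟨I'.equivFin.symm.toEmbedding.trans (Function.Embedding.subtype _), ?_⟩
  calc ∑ i ∈ I, x i ≤ ∑ i ∈ I', x i := sum_le_sum_of_subset_of_nonneg hII' fun i _ _ => hx i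
    _ = ∑ i : I', x i := (sum_coe_sort I' x).symm
    _ = ∑ s, x (I'.equivFin.symm s) := (Equiv.sum_comp I'.equivFin.symm (fun i => x i)).symm

section SubmatrixNorms

variable {N : ℕ} (U : Matrix (Fin N) (Fin N) ℂ)

theorem opNorm_submatrix_le_maxSubNorm {n m : ℕ} (f : Fin n ↪ Fin N) (g : Fin m ↪ Fin N) :
    opNorm (U.submatrix f g) ≤ maxSubNorm N n m U :=
  (le_ciSup (Set.finite_range _).bddAbove g).trans
    (le_ciSup (f := fun f' : Fin n ↪ Fin N => ⨆ g' : Fin m ↪ Fin N, opNorm (U.submatrix f' g'))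
      (Set.finite_range _).bddAbove f)

theorem maxSubNorm_le_sk {n m : ℕ} (hn : 1 ≤ n) (hm : 1 ≤ m) :
    maxSubNorm N n m U ≤ sk N U (n + m - 1) :=
  calc maxSubNorm N n m U = maxSubNorm N (n - 1 + 1) (n + m - 1 - (n - 1)) U := by
        congr 1 <;> omega
    _ ≤ sk N U (n + m - 1) :=
        le_ciSup (f := fun a : Fin (n + m - 1) => maxSubNorm N (a.1 + 1) (n + m - 1 - a.1) U)
          (Set.finite_range _).bddAbove ⟨n - 1, by omega⟩

theorem maxSubNorm_nonneg (n m : ℕ) : 0 ≤ maxSubNorm N n m U :=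
  Real.iSup_nonneg fun _ => Real.iSup_nonneg fun _ => norm_nonneg _

theorem sk_nonneg (k : ℕ) : 0 ≤ sk N U k :=
  Real.iSup_nonneg fun _ => maxSubNorm_nonneg U _ _

theorem sk_zero : sk N U 0 = 0 :=
  Real.iSup_of_isEmpty _

variable {a b : OrthonormalBasis (Fin N) ℂ (EuclideanSpace ℂ (Fin N))}

theorem sk_le_one (hU : ∀ i j, U i j = ⟪a i, b j⟫_ℂ) (k : ℕ) : sk N U k ≤ 1 :=
  Real.iSup_le (fun _ => Real.iSup_le (fun f => Real.iSup_le (fun g =>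
    opNorm_le_one_of_gram (a.orthonormal.comp f f.injective) (b.orthonormal.comp g g.injective)
      fun _ _ => hU _ _) zero_le_one) zero_le_one) zero_le_one

theorem sk_self_eq_one (hU : ∀ i j, U i j = ⟪a i, b j⟫_ℂ) (hN : 0 < N) : sk N U N = 1 := by
  refine le_antisymm (sk_le_one U hU N) ?_
  let g : Fin 1 ↪ Fin N := ⟨fun _ => ⟨0, hN⟩, Function.injective_of_subsingleton _⟩
  calc 1 ≤ opNorm (U.submatrix (Function.Embedding.refl _) g) :=
        one_le_opNorm_of_gram a (b.orthonormal.comp g g.injective) fun _ _ => hU _ _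
    _ ≤ maxSubNorm N N 1 U := opNorm_submatrix_le_maxSubNorm U _ _
    _ ≤ sk N U N := maxSubNorm_le_sk U hN le_rfl

theorem sum_add_sum_le_one_add_sk (hU : ∀ i j, U i j = ⟪a i, b j⟫_ℂ)
    {ψ : EuclideanSpace ℂ (Fin N)} (hψ : ‖ψ‖ = 1) {I J : Finset (Fin N)} {k : ℕ}
    (hIJ : I.card + J.card ≤ k) (hk : k ≤ 2 * N) :
    ∑ i ∈ I, ‖⟪a i, ψ⟫_ℂ‖ ^ 2 + ∑ j ∈ J, ‖⟪b j, ψ⟫_ℂ‖ ^ 2 ≤ 1 + sk N U (k - 1) := by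
  have hbessel (v : OrthonormalBasis (Fin N) ℂ (EuclideanSpace ℂ (Fin N))) (K : Finset (Fin N)) :
      ∑ i ∈ K, ‖⟪v i, ψ⟫_ℂ‖ ^ 2 ≤ 1 :=
    (v.orthonormal.sum_inner_products_le ψ).trans_eq (by rw [hψ, one_pow])
  have hsk := sk_nonneg U (k - 1)
  rcases I.eq_empty_or_nonempty with rfl | hI
  · linarith [hbessel b J, sum_empty (f := fun i => ‖⟪a i, ψ⟫_ℂ‖ ^ 2)]
  rcases J.eq_empty_or_nonempty with rfl | hJ
  · linarith [hbessel a I, sum_empty (f := fun j => ‖⟪b j, ψ⟫_ℂ‖ ^ 2)]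
  obtain ⟨n, m, hIn, hJm, hnN, hmN, hn, hm, rfl⟩ : ∃ n m, I.card ≤ n ∧ J.card ≤ m ∧ n ≤ N ∧
      m ≤ N ∧ 1 ≤ n ∧ 1 ≤ m ∧ n + m = k := by
    have := hI.card_pos
    have := hJ.card_pos
    have : I.card ≤ N := by simpa using card_le_univ I
    have : J.card ≤ N := by simpa using card_le_univ J
    exact ⟨min N (k - J.card), k - min N (k - J.card), by omega⟩
  obtain ⟨f, hf⟩ := exists_embedding_sum_le (x := fun i => ‖⟪a i, ψ⟫_ℂ‖ ^ 2)
    (fun _ => by positivity) hIn (by simpa using hnN)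
  obtain ⟨g, hg⟩ := exists_embedding_sum_le (x := fun j => ‖⟪b j, ψ⟫_ℂ‖ ^ 2)
    (fun _ => by positivity) hJm (by simpa using hmN)
  calc _ ≤ ∑ s, ‖⟪a (f s), ψ⟫_ℂ‖ ^ 2 + ∑ t, ‖⟪b (g t), ψ⟫_ℂ‖ ^ 2 := add_le_add hf hg
    _ ≤ 1 + opNorm (U.submatrix f g) :=
        sum_norm_inner_sq_add_sum_le_one_add_opNorm (a.orthonormal.comp f f.injective)
          (b.orthonormal.comp g g.injective) (fun _ _ => hU _ _) hψ.le
    _ ≤ 1 + sk N U (n + m - 1) := by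
        grw [opNorm_submatrix_le_maxSubNorm, maxSubNorm_le_sk U hn hm]

end SubmatrixNorms

/-- Strong (direct-sum) majorization: let `(a_i)`, `(b_j)` be orthonormal bases of `ℂ^N` with
transition matrix `U_{ij} = ⟨a_i|b_j⟩`, let `ψ` be a unit vector and let
`(x_1,…,x_{2N}) = p^ψ ⊕ q^ψ`.  Then for every `1 ≤ k ≤ 2N` the sum of the `k` largest values
among the `x_i` is at most `1 + s_{k−1}` (with `s_0 = 0`), and consequently
`p^ψ ⊕ q^ψ ≺ (1, s_1, s_2 − s_1, …, s_N − s_{N−1})`. -/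
theorem direct_sum_majorization
    (N : ℕ) (a b : OrthonormalBasis (Fin N) ℂ (EuclideanSpace ℂ (Fin N)))
    (U : Matrix (Fin N) (Fin N) ℂ) (hU : ∀ i j, U i j = (inner ℂ (a i) (b j) : ℂ))
    (ψ : EuclideanSpace ℂ (Fin N)) (hψ : ‖ψ‖ = 1) :
    (∀ k : ℕ, 1 ≤ k → k ≤ 2 * N →
      topSum
        (Sum.elim (fun i => ‖(inner ℂ (a i) ψ : ℂ)‖ ^ 2)
          (fun j => ‖(inner ℂ (b j) ψ : ℂ)‖ ^ 2)) k ≤ 1 + sk N U (k - 1)) ∧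
    Majorizes
      (Sum.elim (fun i => ‖(inner ℂ (a i) ψ : ℂ)‖ ^ 2)
        (fun j => ‖(inner ℂ (b j) ψ : ℂ)‖ ^ 2))
      (fun i : Fin (N + 1) => if i.1 = 0 then 1 else sk N U i.1 - sk N U (i.1 - 1)) := by
  have hN : 0 < N := Nat.pos_of_ne_zero fun hN => by
    subst hN
    simpa [hψ] using a.sum_sq_norm_inner_right ψ
  have hbound (k : ℕ) (hk : k ≤ 2 * N) :
      topSum (Sum.elim (fun i => ‖⟪a i, ψ⟫_ℂ‖ ^ 2) (fun j => ‖⟪b j, ψ⟫_ℂ‖ ^ 2)) k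
        ≤ 1 + sk N U (k - 1) :=
    topSum_sumElim_le fun _ _ hIJ => sum_add_sum_le_one_add_sk U hU hψ hIJ hk
  refine ⟨fun k _ hk => hbound k hk,
    majorizes_increments ?_ (sk_zero U) ?_ fun k _ hk => hbound k (by omega)⟩
  · exact Sum.nonneg_elim_iff.mpr ⟨fun _ => by positivity, fun _ => by positivity⟩
  · simp only [Fintype.sum_sum_type, Sum.elim_inl, Sum.elim_inr]
    rw [a.sum_sq_norm_inner_right, b.sum_sq_norm_inner_right, hψ, sk_self_eq_one U hU hN]
    norm_num
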